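/- arXiv:1704.00196 — 8 statements merged into one kernel-verified Lean document; each statement's English description precedes it below -/
import Mathlib

section
/- Let $(e_k)_{k\ge1}$ be a sequence of nonnegative reals satisfying $e_{k+1} \le e_k - 2\alpha c\, e_k^{\gamma} + \alpha^2 G^2$ for all $k$, where $\alpha, c, G > 0$ and $\gamma \ge 1$. Set $e_* = (\alpha G^2/(2c))^{1/\gamma}$ and $q = 1 - 2\alpha c \gamma e_*^{\gamma - 1}$. If $2\alpha c \gamma e_*^{\gamma-1} \le 1$, then for all $k \ge 1$, $e_k - e_* \le q^{k-1}(e_1 - e_*)$. -/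
lemma rpow_convex_aux (s t γ : ℝ) (hs : 0 < s) (ht : 0 ≤ t) (hγ : (1:ℝ) ≤ γ) :
    s^γ + γ * s^(γ-1) * (t - s) ≤ t^γ := by
  have hu : (-1:ℝ) ≤ t/s - 1 := by
    have : 0 ≤ t/s := div_nonneg ht hs.le
    linarith
  have hber := one_add_mul_self_le_rpow_one_add hu hγ
  have h1 : (1 + (t/s - 1)) = t/s := by ring
  rw [h1, Real.div_rpow ht hs.le] at hber
  have hsγ : (0:ℝ) < s^γ := Real.rpow_pos_of_pos hs γ
  have h2 := mul_le_mul_of_nonneg_right hber hsγ.le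
  rw [div_mul_cancel₀ _ hsγ.ne'] at h2
  have hpow : s^γ = s^(γ-1) * s := by
    rw [← Real.rpow_add_one hs.ne' (γ-1)]; ring_nf
  have h4 : (1 + γ*(t/s-1)) * s^γ = s^γ + γ * s^(γ-1) * (t - s) := by
    rw [hpow]; field_simp
  linarith [h2, h4]

theorem stmt1 (e : ℕ → ℝ) (α c G γ : ℝ) (hα : 0 < α) (hc : 0 < c) (hG : 0 < G)
    (hγ : (1:ℝ) ≤ γ) (he : ∀ k, 0 ≤ e k)
    (hrec : ∀ k, e (k+1) ≤ e k - 2*α*c*(e k)^γ + α^2*G^2)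
    (estar q : ℝ) (hestar : estar = (α*G^2/(2*c))^(1/γ))
    (hq : q = 1 - 2*α*c*γ*estar^(γ-1))
    (hsmall : 2*α*c*γ*estar^(γ-1) ≤ 1) :
    ∀ k, 1 ≤ k → e k - estar ≤ q^(k-1) * (e 1 - estar) := by
  have hγ0 : γ ≠ 0 := by positivity
  have hbase : (0:ℝ) < α*G^2/(2*c) := by positivity
  have hestar_pos : 0 < estar := by
    rw [hestar]; exact Real.rpow_pos_of_pos hbase _
  have hestarγ : estar^γ = α*G^2/(2*c) := by
    rw [hestar, one_div, Real.rpow_inv_rpow hbase.le hγ0]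
  have hαG : α^2*G^2 = 2*α*c*estar^γ := by
    rw [hestarγ]; field_simp
  have hq0 : 0 ≤ q := by rw [hq]; linarith
  -- one step contraction
  have hstep : ∀ k, e (k+1) - estar ≤ q * (e k - estar) := by
    intro k
    have h1 := hrec k
    have h2 := rpow_convex_aux estar (e k) γ hestar_pos (he k) hγ
    rw [hq]
    nlinarith [h1, hαG, mul_le_mul_of_nonneg_left h2 (by positivity : (0:ℝ) ≤ 2*α*c)]
  intro k hk
  obtain ⟨n, rfl⟩ : ∃ n, k = n + 1 := ⟨k - 1, (Nat.succ_pred_eq_of_pos hk).symm⟩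
  simp only [Nat.add_sub_cancel]
  induction n with
  | zero => simp
  | succ m ih =>
      calc e (m + 1 + 1) - estar ≤ q * (e (m+1) - estar) := hstep (m+1)
        _ ≤ q * (q^m * (e 1 - estar)) := mul_le_mul_of_nonneg_left (ih (by omega)) hq0
        _ = q^(m+1) * (e 1 - estar) := by ring
end

section
/- Let $(e_k)_{k\ge1}$ be a sequence of nonnegative reals satisfying $e_{k+1} \le e_k - 2\alpha c\, e_k^{\gamma} + \alpha^2 G^2$ for all $k$, where $\alpha, c, G > 0$, $\gamma \in [1/2, 1]$, and $e_k \le D$ for all $k$ for some constant $D > 0$. Set $e_* = (\alpha G^2/(2c))^{1/\gamma}$ and $q = 1 - 2\alpha c \gamma D^{\gamma - 1}$. If $\alpha \le D^{1-\gamma}/(2c\gamma)$, then $q \in [0,1)$ and for all $k \ge 1$, $e_k - e_* \le \max\{q^{k-1}(e_1 - e_*),\ \alpha^2 G^2\}$. -/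
lemma rpow_tangent {x y γ : ℝ} (hx : 0 < x) (hy : 0 ≤ y) (h0 : 0 ≤ γ) (h1 : γ ≤ 1) :
    y ^ γ ≤ x ^ γ + γ * x ^ (γ - 1) * (y - x) := by
  have hs : (-1 : ℝ) ≤ y / x - 1 := by
    have : 0 ≤ y / x := div_nonneg hy hx.le
    linarith
  have hb := rpow_one_add_le_one_add_mul_self hs h0 h1
  have hyx : 1 + (y / x - 1) = y / x := by ring
  rw [hyx] at hb
  have hdiv : (y / x) ^ γ = y ^ γ / x ^ γ := Real.div_rpow hy hx.le γ
  rw [hdiv] at hb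
  have hxγ : (0:ℝ) < x ^ γ := Real.rpow_pos_of_pos hx γ
  have hb2 : y ^ γ ≤ x ^ γ * (1 + γ * (y / x - 1)) := by
    rw [← div_le_iff₀' hxγ]; exact hb
  refine hb2.trans_eq ?_
  have hx1 : x ^ (γ - 1) = x ^ γ / x := by
    rw [Real.rpow_sub hx, Real.rpow_one]
  rw [hx1]
  field_simp

theorem stmt2 (e : ℕ → ℝ) (α c G γ D : ℝ) (hα : 0 < α) (hc : 0 < c) (hG : 0 < G)
    (hγ : γ ∈ Set.Icc (1/2 : ℝ) 1) (hD : 0 < D) (he : ∀ k, 0 ≤ e k)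
    (heD : ∀ k, e k ≤ D)
    (hrec : ∀ k, e (k+1) ≤ e k - 2*α*c*(e k)^γ + α^2*G^2)
    (estar q : ℝ) (hestar : estar = (α*G^2/(2*c))^(1/γ))
    (hq : q = 1 - 2*α*c*γ*D^(γ-1))
    (hαsmall : α ≤ D^(1-γ)/(2*c*γ)) :
    q ∈ Set.Ico (0:ℝ) 1 ∧
    ∀ k, 1 ≤ k → e k - estar ≤ max (q^(k-1) * (e 1 - estar)) (α^2*G^2) := by
  obtain ⟨hγ0, hγ1⟩ := hγ
  have hγpos : 0 < γ := by linarith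
  have hDγ1 : (0:ℝ) < D ^ (γ - 1) := Real.rpow_pos_of_pos hD _
  have hD1γ : (0:ℝ) < D ^ (1 - γ) := Real.rpow_pos_of_pos hD _
  have hmul : D ^ (1 - γ) * D ^ (γ - 1) = 1 := by
    rw [← Real.rpow_add hD]; norm_num
  have hq0 : 0 ≤ q := by
    rw [hq]
    have h1 : α * (2 * c * γ) ≤ D ^ (1 - γ) := (le_div_iff₀ (by positivity)).mp hαsmall
    nlinarith
  have hq1 : q < 1 := by
    have : 0 < 2*α*c*γ*D^(γ-1) := by positivity
    rw [hq]; linarith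
  have hestar_pos : 0 < estar := by
    rw [hestar]; apply Real.rpow_pos_of_pos; positivity
  have hestarγ : estar ^ γ = α * G^2 / (2*c) := by
    rw [hestar, ← Real.rpow_natCast]
    rw [← Real.rpow_mul (by positivity), one_div_mul_cancel hγpos.ne', Real.rpow_one]
  have haG : (0:ℝ) ≤ α^2 * G^2 := by positivity
  -- key one-step inequality
  have key : ∀ k, e (k+1) - estar ≤ max (q * (e k - estar)) (α^2 * G^2) := by
    intro k
    rcases le_or_gt (e k) estar with hle | hgt
    · have h2 : 0 ≤ 2*α*c*(e k)^γ := by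
        have := Real.rpow_nonneg (he k) γ; positivity
      have := hrec k
      have : e (k+1) - estar ≤ α^2 * G^2 := by nlinarith
      exact this.trans (le_max_right _ _)
    · refine le_trans ?_ (le_max_left _ _)
      have hek : 0 < e k := lt_trans hestar_pos hgt
      have htan := rpow_tangent hek hestar_pos.le hγpos.le hγ1
      have hbase : D ^ (γ - 1) ≤ (e k) ^ (γ - 1) :=
        Real.rpow_le_rpow_of_nonpos hek (heD k) (by linarith)
      have hαG : α^2 * G^2 = 2*α*c * estar ^ γ := by
        rw [hestarγ]; field_simp
      have := hrec k
      -- e(k+1) - estar ≤ (e k - estar) - 2αc((e k)^γ - estar^γ)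
      -- ≥ γ * (e k)^{γ-1} (e k - estar) ≥ γ D^{γ-1}(e k - estar)
      have hsub : γ * D ^ (γ - 1) * (e k - estar) ≤ (e k) ^ γ - estar ^ γ := by
        nlinarith [mul_le_mul_of_nonneg_right (mul_le_mul_of_nonneg_left hbase hγpos.le)
          (by linarith : (0:ℝ) ≤ e k - estar)]
      rw [hq]
      nlinarith [mul_le_mul_of_nonneg_left hsub (by positivity : (0:ℝ) ≤ 2*α*c)]
  refine ⟨⟨hq0, hq1⟩, ?_⟩
  have main : ∀ n, e (n+1) - estar ≤ max (q^n * (e 1 - estar)) (α^2*G^2) := by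
    intro n
    induction n with
    | zero => simp
    | succ n ih =>
      refine (key (n+1)).trans ?_
      rcases le_total (e (n+1) - estar) 0 with hneg | hpos
      · have : q * (e (n+1) - estar) ≤ α^2 * G^2 :=
          le_trans (mul_nonpos_of_nonneg_of_nonpos hq0 hneg) haG
        simp [max_le_iff, this, le_max_right]
      · have h1 : q * (e (n+1) - estar) ≤ q * max (q^n * (e 1 - estar)) (α^2*G^2) :=
          mul_le_mul_of_nonneg_left ih hq0
        have h2 : q * max (q^n * (e 1 - estar)) (α^2*G^2) ≤
            max (q^(n+1) * (e 1 - estar)) (α^2*G^2) := by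
          rcases max_cases (q^n * (e 1 - estar)) (α^2*G^2) with ⟨hm, _⟩ | ⟨hm, _⟩
          · rw [hm, pow_succ]
            refine le_max_of_le_left ?_; ring_nf; rfl
          · rw [hm]
            exact le_max_of_le_right (by nlinarith)
        exact max_le (h1.trans h2) (le_max_right _ _)
  intro k hk
  obtain ⟨n, rfl⟩ : ∃ n, k = n + 1 := ⟨k - 1, (Nat.succ_pred_eq_of_pos hk).symm⟩
  simpa using main n
end

section
/- Let $h : \mathcal{H} \to \mathbb{R}$ be a convex function on a real Hilbert space, $\mathcal{C} \subseteq \mathcal{H}$ a nonempty closed convex set, and $\mathcal{X}_h = \{x \in \mathcal{C} : h(x) = h^*\}$ nonempty closed convex, where $h^* = \min_{x\in\mathcal{C}} h(x)$. Suppose $h$ satisfies $h(x) - h^* \ge c\, d(x, \mathcal{X}_h)^{1/\theta}$ for all $x \in \mathcal{C}$ with $c > 0$ and $\theta \in (0,1]$, and $\|g\| \le G$ for every subgradient $g \in \partial h(x)$, $x \in \mathcal{C}$. Then for the projected subgradient iteration $x_{k+1} = P_{\mathcal{C}}(x_k - \alpha_k g_k)$ with $g_k \in \partial h(x_k)$ and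 $\alpha_k > 0$, the squared distances satisfy $d(x_{k+1}, \mathcal{X}_h)^2 \le d(x_k, \mathcal{X}_h)^2 - 2\alpha_k c\, (d(x_k, \mathcal{X}_h)^2)^{1/(2\theta)} + \alpha_k^2 G^2$ for all $k \ge 1$. -/
open RealInnerProductSpace

theorem stmt3 {H : Type*} [NormedAddCommGroup H] [InnerProductSpace ℝ H]
    (C X : Set H) (hCconv : Convex ℝ C) (hCclosed : IsClosed C) (hCne : C.Nonempty)
    (h : H → ℝ) (hconv : ConvexOn ℝ Set.univ h)
    (hstar : ℝ) (hmin : ∀ x ∈ C, hstar ≤ h x)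
    (hX : X = {x | x ∈ C ∧ h x = hstar}) (hXne : X.Nonempty)
    (c G θ : ℝ) (hc : 0 < c) (hG : 0 < G) (hθ : θ ∈ Set.Ioc (0:ℝ) 1)
    (heb : ∀ x ∈ C, c * (Metric.infDist x X) ^ (1/θ) ≤ h x - hstar)
    (P : H → H) (hPmem : ∀ x, P x ∈ C)
    (hPnonexp : ∀ x y, ‖P x - P y‖ ≤ ‖x - y‖)
    (hPid : ∀ x ∈ C, P x = x)
    (x g : ℕ → H) (α : ℕ → ℝ) (hαpos : ∀ k, 0 < α k)
    (hx1 : x 1 ∈ C)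
    (hg : ∀ k, ∀ y, h (x k) + ⟪g k, y - x k⟫ ≤ h y)
    (hgb : ∀ k, ‖g k‖ ≤ G)
    (hiter : ∀ k, x (k+1) = P (x k - α k • g k)) :
    ∀ k, 1 ≤ k →
      (Metric.infDist (x (k+1)) X)^2 ≤ (Metric.infDist (x k) X)^2
        - 2 * α k * c * ((Metric.infDist (x k) X)^2) ^ (1/(2*θ))
        + (α k)^2 * G^2 := by
  have hθ0 : 0 < θ := hθ.1
  have hxC : ∀ k, 1 ≤ k → x k ∈ C := by
    intro k hk
    match k, hk with
    | 1, _ => exact hx1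
    | (m+2), _ => rw [hiter]; exact hPmem _
  intro k hk
  set d := Metric.infDist (x k) X with hd
  set d' := Metric.infDist (x (k+1)) X with hd'
  have hdnn : 0 ≤ d := Metric.infDist_nonneg
  have hd'nn : 0 ≤ d' := Metric.infDist_nonneg
  -- rewrite the rpow of the square
  have hrw : (d^2) ^ (1/(2*θ)) = d ^ (1/θ) := by
    rw [← Real.rpow_natCast d 2, ← Real.rpow_mul hdnn]
    congr 1
    push_cast
    field_simp
  rw [hrw]
  -- key estimate via ε-approximate nearest point
  have key : ∀ ε : ℝ, 0 < ε →
      d'^2 ≤ (d + ε)^2 - 2 * α k * c * d ^ (1/θ) + (α k)^2 * G^2 := by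
    intro ε hε
    obtain ⟨y, hyX, hylt⟩ := (Metric.infDist_lt_iff hXne).1 (by linarith : d < d + ε)
    have hyC : y ∈ C := by rw [hX] at hyX; exact hyX.1
    have hyh : h y = hstar := by rw [hX] at hyX; exact hyX.2
    have h1 : d' ≤ ‖x (k+1) - y‖ := by
      rw [← dist_eq_norm]; exact Metric.infDist_le_dist_of_mem hyX
    have h2 : ‖x (k+1) - y‖ ≤ ‖(x k - α k • g k) - y‖ := by
      rw [hiter k]
      calc ‖P (x k - α k • g k) - y‖ = ‖P (x k - α k • g k) - P y‖ := by rw [hPid y hyC]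
        _ ≤ ‖(x k - α k • g k) - y‖ := hPnonexp _ _
    have h3 : d' ≤ ‖(x k - α k • g k) - y‖ := h1.trans h2
    have hsq : d'^2 ≤ ‖(x k - α k • g k) - y‖^2 :=
      pow_le_pow_left₀ hd'nn h3 2
    have hexp : ‖(x k - α k • g k) - y‖^2
        = ‖x k - y‖^2 - 2 * α k * ⟪g k, x k - y⟫ + (α k)^2 * ‖g k‖^2 := by
      have : (x k - α k • g k) - y = (x k - y) - α k • g k := by abel
      rw [this, norm_sub_sq_real, real_inner_smul_right, norm_smul]
      simp [Real.norm_eq_abs, abs_of_pos (hαpos k), real_inner_comm]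
      ring
    -- subgradient inequality
    have hsub : c * d ^ (1/θ) ≤ ⟪g k, x k - y⟫ := by
      have := hg k y
      rw [hyh] at this
      have h4 : ⟪g k, y - x k⟫ = -⟪g k, x k - y⟫ := by
        rw [← inner_neg_right]; congr 1; abel
      rw [h4] at this
      have h5 := heb (x k) (hxC k hk)
      rw [← hd] at h5
      linarith
    have hnb : ‖x k - y‖^2 ≤ (d + ε)^2 := by
      have : ‖x k - y‖ ≤ d + ε := by rw [← dist_eq_norm]; exact le_of_lt hylt
      exact pow_le_pow_left₀ (norm_nonneg _) this 2
    have hgb2 : (α k)^2 * ‖g k‖^2 ≤ (α k)^2 * G^2 := by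
      have : ‖g k‖^2 ≤ G^2 := pow_le_pow_left₀ (norm_nonneg _) (hgb k) 2
      exact mul_le_mul_of_nonneg_left this (sq_nonneg _)
    have hmid : - (2 * α k * ⟪g k, x k - y⟫) ≤ - (2 * α k * (c * d ^ (1/θ))) := by
      have := mul_le_mul_of_nonneg_left hsub (by have := hαpos k; linarith : (0:ℝ) ≤ 2 * α k)
      linarith
    calc d'^2 ≤ ‖(x k - α k • g k) - y‖^2 := hsq
      _ = ‖x k - y‖^2 - 2 * α k * ⟪g k, x k - y⟫ + (α k)^2 * ‖g k‖^2 := hexp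
      _ ≤ (d + ε)^2 - 2 * α k * c * d ^ (1/θ) + (α k)^2 * G^2 := by
          have := hmid
          nlinarith [hnb, hgb2]
  -- pass to the limit ε → 0
  refine le_of_forall_pos_le_add ?_
  intro δ hδ
  have h2d1 : (0:ℝ) < 2*d + 1 := by linarith
  set ε := min 1 (δ / (2*d + 1)) with hε
  have hεpos : 0 < ε := lt_min one_pos (div_pos hδ h2d1)
  have hε1 : ε ≤ 1 := min_le_left _ _
  have hε2 : ε ≤ δ / (2*d + 1) := min_le_right _ _
  have hεδ : (2*d + 1) * ε ≤ δ := by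
    rw [mul_comm]
    exact (le_div_iff₀ h2d1).1 hε2
  have := key ε hεpos
  nlinarith [hεδ, hε1, hεpos, hdnn]
end

section
/- Let $(e_k)_{k\ge1}$ be a sequence of nonnegative reals satisfying $e_{k+1} \le (1 - 2\alpha_k c) e_k + \alpha_k^2 G^2$ for all $k \ge 1$, where $c, G > 0$, $\alpha_k = \frac{2k+1}{2c(k+1)^2}$. Then for all $k \ge 1$, $e_{k+1} \le \frac{e_1}{(k+1)^2} + \frac{G^2}{c^2(k+1)}$. -/
/-!
With the step size `α_k = (2k+1)/(2c(k+1)²)` the contraction factor is `1 - 2α_k c = k²/(k+1)²`,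
so multiplying the recursion by `(k+1)²` gives `(k+1)² e_{k+1} ≤ k² e_k + G²/c²`, the noise term
being bounded through `(2k+1)² ≤ 4(k+1)²`. Telescoping yields `(k+1)² e_{k+1} ≤ e_1 + k G²/c²`.
-/

theorem le_add_nsmul_of_le_add {α : Type*} [AddCommMonoid α] [PartialOrder α]
    [IsOrderedAddMonoid α] {u : ℕ → α} {D : α} {m : ℕ}
    (h : ∀ k, m ≤ k → u (k + 1) ≤ u k + D) (n : ℕ) : u (m + n) ≤ u m + n • D := by
  induction n with
  | zero => simp
  | succ n ih =>
    calc u (m + (n + 1)) ≤ u (m + n) + D := h (m + n) (Nat.le_add_right m n)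
      _ ≤ u m + n • D + D := add_le_add_left ih D
      _ = u m + (n + 1) • D := by rw [add_assoc, succ_nsmul]

noncomputable def quadraticGrowthStepSize (c k : ℝ) : ℝ := (2 * k + 1) / (2 * c * (k + 1) ^ 2)

section quadraticGrowthStepSize

variable {c k : ℝ}

theorem one_sub_two_mul_quadraticGrowthStepSize_mul (hc : c ≠ 0) (hk : 0 ≤ k) :
    1 - 2 * quadraticGrowthStepSize c k * c = k ^ 2 / (k + 1) ^ 2 := by
  unfold quadraticGrowthStepSize
  field_simp
  ring

theorem sq_add_one_mul_quadraticGrowthStepSize_sq_le (hk : 0 ≤ k) :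
    (k + 1) ^ 2 * quadraticGrowthStepSize c k ^ 2 ≤ 1 / c ^ 2 := by
  have hk1 : (k + 1) ^ 2 ≠ 0 := by positivity
  have hodd : (2 * k + 1) ^ 2 ≤ 4 * (k + 1) ^ 2 := by nlinarith
  calc (k + 1) ^ 2 * quadraticGrowthStepSize c k ^ 2
      = (2 * k + 1) ^ 2 / (4 * (k + 1) ^ 2) * (1 / c ^ 2) := by
        unfold quadraticGrowthStepSize
        field_simp
        ring
    _ ≤ 1 * (1 / c ^ 2) := by
        gcongr
        exact div_le_one_of_le₀ hodd (by positivity)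
    _ = 1 / c ^ 2 := one_mul _

theorem sq_add_one_mul_le_of_le_quadraticGrowthStep {G x y : ℝ} (hc : c ≠ 0) (hk : 0 ≤ k)
    (h : y ≤ (1 - 2 * quadraticGrowthStepSize c k * c) * x
      + quadraticGrowthStepSize c k ^ 2 * G ^ 2) :
    (k + 1) ^ 2 * y ≤ k ^ 2 * x + G ^ 2 / c ^ 2 := by
  rw [one_sub_two_mul_quadraticGrowthStepSize_mul hc hk] at h
  have hnoise := mul_le_mul_of_nonneg_right
    (sq_add_one_mul_quadraticGrowthStepSize_sq_le (c := c) hk) (sq_nonneg G)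
  have hk1 : (k + 1) ^ 2 ≠ 0 := by positivity
  calc (k + 1) ^ 2 * y
      ≤ (k + 1) ^ 2 * (k ^ 2 / (k + 1) ^ 2 * x + quadraticGrowthStepSize c k ^ 2 * G ^ 2) :=
        mul_le_mul_of_nonneg_left h (sq_nonneg _)
    _ = k ^ 2 * x + (k + 1) ^ 2 * quadraticGrowthStepSize c k ^ 2 * G ^ 2 := by
        field_simp
    _ ≤ k ^ 2 * x + 1 / c ^ 2 * G ^ 2 := by linarith
    _ = k ^ 2 * x + G ^ 2 / c ^ 2 := by ring

end quadraticGrowthStepSize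

theorem le_div_sq_add_div_of_sq_add_one_mul_le {a x y D : ℝ} (hx : 0 ≤ x) (hD : 0 ≤ D)
    (h : (x + 1) ^ 2 * y ≤ a + x * D) : y ≤ a / (x + 1) ^ 2 + D / (x + 1) := by
  have hx1 : 0 < x + 1 := by linarith
  rw [div_add_div _ _ (by positivity) hx1.ne', le_div_iff₀ (by positivity)]
  nlinarith [mul_nonneg hD hx1.le]

theorem stmt7_general (e : ℕ → ℝ) (c G : ℝ) (hc : 0 < c)
    (hrec : ∀ k, 1 ≤ k → e (k+1) ≤
      (1 - 2*((2*(k:ℝ)+1)/(2*c*((k:ℝ)+1)^2))*c) * e k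
      + ((2*(k:ℝ)+1)/(2*c*((k:ℝ)+1)^2))^2 * G^2) :
    ∀ k, 1 ≤ k → e (k+1) ≤ e 1/((k:ℝ)+1)^2 + G^2/(c^2*((k:ℝ)+1)) := by
  have hstep : ∀ k, 1 ≤ k →
      ((k + 1 : ℕ) : ℝ) ^ 2 * e (k + 1) ≤ (k : ℝ) ^ 2 * e k + G ^ 2 / c ^ 2 := by
    intro k hk
    push_cast
    exact sq_add_one_mul_le_of_le_quadraticGrowthStep hc.ne' k.cast_nonneg (hrec k hk)
  intro k _
  have htele := le_add_nsmul_of_le_add (u := fun j : ℕ ↦ (j : ℝ) ^ 2 * e j) hstep k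
  simp only [add_comm 1 k, Nat.cast_add, Nat.cast_one, one_pow, one_mul, nsmul_eq_mul] at htele
  rw [← div_div]
  exact le_div_sq_add_div_of_sq_add_one_mul_le k.cast_nonneg (by positivity) htele

theorem stmt7 (e : ℕ → ℝ) (c G : ℝ) (hc : 0 < c) (hG : 0 < G) (he : ∀ k, 0 ≤ e k)
    (hrec : ∀ k, 1 ≤ k → e (k+1) ≤
      (1 - 2*((2*(k:ℝ)+1)/(2*c*((k:ℝ)+1)^2))*c) * e k
      + ((2*(k:ℝ)+1)/(2*c*((k:ℝ)+1)^2))^2 * G^2) :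
    ∀ k, 1 ≤ k → e (k+1) ≤ e 1/((k:ℝ)+1)^2 + G^2/(c^2*((k:ℝ)+1)) :=
  stmt7_general e c G hc hrec
end

section
/- Suppose Assumption 3 holds with $\theta = 1/2$ (i.e., $h$ is convex closed with quadratic growth $h(x) - h^* \ge c\, d(x,\mathcal{X}_h)^2$ and subgradients bounded by $G$ on $\mathcal{C}$). Consider the projected subgradient method with $\alpha_k = \alpha_1 k^{-1}$ where $0 < \alpha_1 \le 1/c$. Then for all $k \ge 1$, $d(x_k, \mathcal{X}_h)^2 \le \max\left\{\frac{2\alpha_1 G^2}{c},\ d(x_1, \mathcal{X}_h)^2\right\} k^{-c\alpha_1}$. -/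
/-!
Quadratic growth turns one projected subgradient step into the recursion
`d_{k+1}² ≤ (1 - 2cα_k) d_k² + α_k² G²`, since `⟪g_k, x_k - y⟫ ≥ h x_k - h* ≥ c d_k²` for every
minimiser `y`. With `α_k = α₁/k` and `q = cα₁ ≤ 1` this is a Chung-type recursion, and the bound
`M k^{-q}` propagates by induction because Bernoulli's inequality `(1 + 1/k)^q ≤ 1 + q/k` gives
`(1 - 2q/k) k^{-q} + q/(2k²) ≤ (k + 1)^{-q}`; the constant `M` is chosen so that `α₁² G² ≤ (q/2) M`.
-/

open RealInnerProductSpace Metric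

section RpowDecay

variable {q t : ℝ}

lemma div_two_mul_sq_le_add_one_rpow_neg (ht : 1 ≤ t) (hq1 : q ≤ 1) :
    q / (2 * t ^ 2) ≤ (t + 1) ^ (-q) := by
  have ht1 : 0 < t + 1 := by linarith
  have hpow : (t + 1) ^ q ≤ 2 * t ^ 2 :=
    calc (t + 1) ^ q ≤ (t + 1) ^ (1 : ℝ) := Real.rpow_le_rpow_of_exponent_le (by linarith) hq1
      _ = t + 1 := Real.rpow_one _
      _ ≤ 2 * t ^ 2 := by nlinarith
  rw [Real.rpow_neg ht1.le, div_le_iff₀ (by positivity)]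
  calc q ≤ 1 := hq1
    _ = ((t + 1) ^ q)⁻¹ * (t + 1) ^ q := (inv_mul_cancel₀ (Real.rpow_pos_of_pos ht1 q).ne').symm
    _ ≤ ((t + 1) ^ q)⁻¹ * (2 * t ^ 2) := by gcongr

lemma one_sub_mul_rpow_neg_add_le_add_one_rpow_neg (ht : 1 ≤ t) (hq0 : 0 ≤ q) (hq1 : q ≤ 1) :
    (1 - 2 * q / t) * t ^ (-q) + q / (2 * t ^ 2) ≤ (t + 1) ^ (-q) := by
  have ht0 : 0 < t := by linarith
  have h1t : 0 < 1 + 1 / t := by positivity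
  have hbern : (1 + 1 / t) ^ q ≤ 1 + q / t := by
    simpa [mul_one_div, div_eq_mul_inv] using
      rpow_one_add_le_one_add_mul_self (s := 1 / t) (by linarith [one_div_pos.mpr ht0]) hq0 hq1
  have hinv : 1 - q / t ≤ (1 + 1 / t) ^ (-q) := by
    rw [Real.rpow_neg h1t.le, inv_eq_one_div, le_div_iff₀ (Real.rpow_pos_of_pos h1t q)]
    have : q / t ≤ 1 := (div_le_one ht0).mpr (by linarith)
    calc (1 - q / t) * (1 + 1 / t) ^ q ≤ (1 - q / t) * (1 + q / t) := by gcongr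
      _ ≤ 1 := by nlinarith [sq_nonneg (q / t)]
  have hsplit : (t + 1) ^ (-q) = t ^ (-q) * (1 + 1 / t) ^ (-q) := by
    rw [← Real.mul_rpow ht0.le h1t.le]
    field_simp
  have hsmall : q / (2 * t ^ 2) ≤ q / t * t ^ (-q) := by
    have : t⁻¹ ≤ t ^ (-q) := by
      simpa [Real.rpow_neg_one] using
        Real.rpow_le_rpow_of_exponent_le ht (show (-1 : ℝ) ≤ -q by linarith)
    calc q / (2 * t ^ 2) ≤ q / t ^ 2 := div_le_div_of_nonneg_left hq0 (by positivity) (by linarith [sq_nonneg t])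
      _ = q / t * t⁻¹ := by ring
      _ ≤ q / t * t ^ (-q) := by gcongr
  calc (1 - 2 * q / t) * t ^ (-q) + q / (2 * t ^ 2)
      ≤ (1 - 2 * q / t) * t ^ (-q) + q / t * t ^ (-q) := by gcongr
    _ = (1 - q / t) * t ^ (-q) := by ring
    _ ≤ (1 + 1 / t) ^ (-q) * t ^ (-q) := by gcongr
    _ = (t + 1) ^ (-q) := by rw [hsplit, mul_comm]

end RpowDecay

lemma le_mul_rpow_neg_of_le_one_sub_mul_add {u : ℕ → ℝ} {q B M : ℝ} (hu : ∀ k, 0 ≤ u k)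
    (hq0 : 0 ≤ q) (hq1 : q ≤ 1) (hB : B ≤ q / 2 * M) (hu1 : u 1 ≤ M)
    (hrec : ∀ k, 1 ≤ k → u (k + 1) ≤ (1 - 2 * q / k) * u k + B / (k : ℝ) ^ 2) :
    ∀ k, 1 ≤ k → u k ≤ M * (k : ℝ) ^ (-q) := by
  have hM : 0 ≤ M := (hu 1).trans hu1
  intro k hk
  induction k, hk using Nat.le_induction with
  | base => simpa using hu1
  | succ k hk ih =>
    have hk1 : (1 : ℝ) ≤ k := by exact_mod_cast hk
    have hBk : B / (k : ℝ) ^ 2 ≤ M * (q / (2 * k ^ 2)) := by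
      rw [div_le_iff₀ (by positivity)]
      calc B ≤ q / 2 * M := hB
        _ = M * (q / (2 * k ^ 2)) * k ^ 2 := by field_simp
    push_cast
    rcases le_total 0 (1 - 2 * q / k) with hcoef | hcoef
    · calc u (k + 1) ≤ (1 - 2 * q / k) * (M * (k : ℝ) ^ (-q)) + M * (q / (2 * k ^ 2)) := by
            have := hrec k hk
            have := mul_le_mul_of_nonneg_left ih hcoef
            linarith
        _ = M * ((1 - 2 * q / k) * (k : ℝ) ^ (-q) + q / (2 * k ^ 2)) := by ring
        _ ≤ M * ((k + 1 : ℝ) ^ (-q)) := by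
            gcongr; exact one_sub_mul_rpow_neg_add_le_add_one_rpow_neg hk1 hq0 hq1
    · calc u (k + 1) ≤ M * (q / (2 * k ^ 2)) := by
            nlinarith [hrec k hk, mul_nonpos_of_nonpos_of_nonneg hcoef (hu k)]
        _ ≤ M * ((k + 1 : ℝ) ^ (-q)) := by
            gcongr; exact div_two_mul_sq_le_add_one_rpow_neg hk1 hq1

lemma le_infDist_sq_of_forall_le_dist_sq {α : Type*} [PseudoMetricSpace α] {s : Set α}
    (hs : s.Nonempty) {x : α} {a : ℝ} (h : ∀ y ∈ s, a ≤ dist x y ^ 2) : a ≤ infDist x s ^ 2 := by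
  rcases le_or_gt a 0 with ha | ha
  · exact ha.trans (sq_nonneg _)
  have hsqrt : √a ≤ infDist x s := by
    by_contra! hlt
    obtain ⟨y, hy, hxy⟩ := (infDist_lt_iff hs).mp hlt
    nlinarith [h y hy, Real.sq_sqrt ha.le, dist_nonneg (x := x) (y := y)]
  nlinarith [Real.sq_sqrt ha.le, Real.sqrt_nonneg a]

section ProjectedSubgradient

variable {H : Type*} [NormedAddCommGroup H] [InnerProductSpace ℝ H]

lemma norm_sub_smul_sq (v g : H) (α : ℝ) :
    ‖v - α • g‖ ^ 2 = ‖v‖ ^ 2 - 2 * α * ⟪g, v⟫ + α ^ 2 * ‖g‖ ^ 2 := by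
  rw [norm_sub_sq_real, real_inner_smul_right, real_inner_comm, norm_smul, Real.norm_eq_abs,
    mul_pow, sq_abs]
  ring

lemma infDist_sq_projected_step_le {X : Set H} (hX : X.Nonempty) {P : H → H}
    (hP : ∀ x y, ‖P x - P y‖ ≤ ‖x - y‖) (hPX : ∀ y ∈ X, P y = y) {x g : H} {α c G : ℝ}
    (hα : 0 ≤ α) (hg : ‖g‖ ≤ G) (hgX : ∀ y ∈ X, c * infDist x X ^ 2 ≤ ⟪g, x - y⟫) :
    infDist (P (x - α • g)) X ^ 2 ≤ (1 - 2 * c * α) * infDist x X ^ 2 + α ^ 2 * G ^ 2 := by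
  suffices ∀ y ∈ X,
      infDist (P (x - α • g)) X ^ 2 + 2 * c * α * infDist x X ^ 2 - α ^ 2 * G ^ 2 ≤ dist x y ^ 2 by
    linarith [le_infDist_sq_of_forall_le_dist_sq hX this]
  intro y hy
  have hstep : infDist (P (x - α • g)) X ≤ ‖(x - y) - α • g‖ :=
    calc infDist (P (x - α • g)) X ≤ dist (P (x - α • g)) y := infDist_le_dist_of_mem hy
      _ = ‖P (x - α • g) - P y‖ := by rw [dist_eq_norm, hPX y hy]
      _ ≤ ‖x - α • g - y‖ := hP _ _
      _ = ‖(x - y) - α • g‖ := by rw [sub_right_comm]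
  have hsq := pow_le_pow_left₀ infDist_nonneg hstep 2
  have hg2 : α ^ 2 * ‖g‖ ^ 2 ≤ α ^ 2 * G ^ 2 := by gcongr
  rw [norm_sub_smul_sq] at hsq
  rw [dist_eq_norm]
  nlinarith [mul_le_mul_of_nonneg_left (hgX y hy) hα]

end ProjectedSubgradient

theorem stmt12_general {H : Type*} [NormedAddCommGroup H] [InnerProductSpace ℝ H]
    (C X : Set H)
    (h : H → ℝ)
    (hstar : ℝ)
    (hX : X = {x | x ∈ C ∧ h x = hstar}) (hXne : X.Nonempty)
    (c G : ℝ) (hc : 0 < c)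
    (heb : ∀ x ∈ C, c * (Metric.infDist x X)^2 ≤ h x - hstar)
    (P : H → H) (hPmem : ∀ x, P x ∈ C)
    (hPnonexp : ∀ x y, ‖P x - P y‖ ≤ ‖x - y‖)
    (hPid : ∀ x ∈ C, P x = x)
    (α1 : ℝ) (hα1 : 0 < α1) (hα1c : α1 ≤ 1/c)
    (x g : ℕ → H)
    (hx1 : x 1 ∈ C)
    (hg : ∀ k, ∀ y, h (x k) + ⟪g k, y - x k⟫ ≤ h y)
    (hgb : ∀ k, ‖g k‖ ≤ G)
    (hiter : ∀ k, 1 ≤ k → x (k+1) = P (x k - (α1 * (k:ℝ)⁻¹) • g k)) :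
    ∀ k, 1 ≤ k →
      (Metric.infDist (x k) X)^2 ≤
        max (2*α1*G^2/c) ((Metric.infDist (x 1) X)^2) * (k:ℝ)^(-(c*α1)) := by
  have hq1 : c * α1 ≤ 1 := by rwa [le_div_iff₀ hc, mul_comm] at hα1c
  have hmem : ∀ k, 1 ≤ k → x k ∈ C :=
    Nat.le_induction hx1 fun k hk _ => hiter k hk ▸ hPmem _
  have hgX : ∀ k, 1 ≤ k → ∀ y ∈ X, c * infDist (x k) X ^ 2 ≤ ⟪g k, x k - y⟫ := by
    intro k hk y hy
    rw [hX] at hy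
    have hsub := hg k y
    rw [hy.2, ← neg_sub, inner_neg_right] at hsub
    linarith [heb _ (hmem k hk)]
  refine le_mul_rpow_neg_of_le_one_sub_mul_add (u := fun k => infDist (x k) X ^ 2)
    (B := α1 ^ 2 * G ^ 2)
    (fun _ => sq_nonneg _) (by positivity) hq1 ?_ (le_max_right _ _) ?_
  · calc α1 ^ 2 * G ^ 2 = c * α1 / 2 * (2 * α1 * G ^ 2 / c) := by field_simp
      _ ≤ c * α1 / 2 * _ := by gcongr; exact le_max_left _ _
  · intro k hk
    have hPX : ∀ y ∈ X, P y = y := fun y hy => hPid y (hX ▸ hy).1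
    calc infDist (x (k + 1)) X ^ 2
        ≤ (1 - 2 * c * (α1 * (k : ℝ)⁻¹)) * infDist (x k) X ^ 2 + (α1 * (k : ℝ)⁻¹) ^ 2 * G ^ 2 :=
          hiter k hk ▸ infDist_sq_projected_step_le hXne hPnonexp hPX (by positivity) (hgb k)
            (hgX k hk)
      _ = (1 - 2 * (c * α1) / k) * infDist (x k) X ^ 2 + α1 ^ 2 * G ^ 2 / (k : ℝ) ^ 2 := by ring

theorem stmt12 {H : Type*} [NormedAddCommGroup H] [InnerProductSpace ℝ H]
    (C X : Set H) (hCconv : Convex ℝ C) (hCclosed : IsClosed C) (hCne : C.Nonempty)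
    (h : H → ℝ) (hconv : ConvexOn ℝ Set.univ h)
    (hstar : ℝ) (hmin : ∀ x ∈ C, hstar ≤ h x)
    (hX : X = {x | x ∈ C ∧ h x = hstar}) (hXne : X.Nonempty)
    (c G : ℝ) (hc : 0 < c) (hG : 0 < G)
    (heb : ∀ x ∈ C, c * (Metric.infDist x X)^2 ≤ h x - hstar)
    (P : H → H) (hPmem : ∀ x, P x ∈ C)
    (hPnonexp : ∀ x y, ‖P x - P y‖ ≤ ‖x - y‖)
    (hPid : ∀ x ∈ C, P x = x)
    (α1 : ℝ) (hα1 : 0 < α1) (hα1c : α1 ≤ 1/c)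
    (x g : ℕ → H)
    (hx1 : x 1 ∈ C)
    (hg : ∀ k, ∀ y, h (x k) + ⟪g k, y - x k⟫ ≤ h y)
    (hgb : ∀ k, ‖g k‖ ≤ G)
    (hiter : ∀ k, 1 ≤ k → x (k+1) = P (x k - (α1 * (k:ℝ)⁻¹) • g k)) :
    ∀ k, 1 ≤ k →
      (Metric.infDist (x k) X)^2 ≤
        max (2*α1*G^2/c) ((Metric.infDist (x 1) X)^2) * (k:ℝ)^(-(c*α1)) :=
  stmt12_general C X h hstar hX hXne c G hc heb P hPmem hPnonexp hPid α1 hα1 hα1c x g hx1 hg hgb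
    hiter
end

section
/- Suppose $h$ satisfies the H\"older error bound with $\theta = 1$, i.e., $h(x) - h^* \ge c\, d(x, \mathcal{X}_h)$ for all $x \in \mathcal{C}$, with $c > 0$, and all subgradients on $\mathcal{C}$ are bounded in norm by $G$. Consider the noisy projected subgradient iteration $x_{k+1} = P_{\mathcal{C}}(x_k - \alpha_k(g_k + r_k))$ with $g_k \in \partial h(x_k)$ and $\|r_k\| \le R < c$. Then for all $k$, $d(x_{k+1}, \mathcal{X}_h)^2 \le d(x_k, \mathcal{X}_h)^2 - 2\alpha_k (c - R)\, d(x_k, \mathcal{X}_h) + 2\alpha_k^2 (R^2 + G^2)$. -/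
open RealInnerProductSpace

theorem stmt17 {H : Type*} [NormedAddCommGroup H] [InnerProductSpace ℝ H]
    (C X : Set H) (hCconv : Convex ℝ C) (hCclosed : IsClosed C) (hCne : C.Nonempty)
    (h : H → ℝ) (hconv : ConvexOn ℝ Set.univ h)
    (hstar : ℝ) (hmin : ∀ x ∈ C, hstar ≤ h x)
    (hX : X = {x | x ∈ C ∧ h x = hstar}) (hXne : X.Nonempty)
    (c G R : ℝ) (hc : 0 < c) (hG : 0 < G) (hR : 0 ≤ R) (hRc : R < c)
    (heb : ∀ x ∈ C, c * Metric.infDist x X ≤ h x - hstar)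
    (P : H → H) (hPmem : ∀ x, P x ∈ C)
    (hPnonexp : ∀ x y, ‖P x - P y‖ ≤ ‖x - y‖)
    (hPid : ∀ x ∈ C, P x = x)
    (x g r : ℕ → H) (α : ℕ → ℝ) (hαpos : ∀ k, 0 < α k)
    (hx1 : x 1 ∈ C)
    (hg : ∀ k, ∀ y, h (x k) + ⟪g k, y - x k⟫ ≤ h y)
    (hgb : ∀ k, ‖g k‖ ≤ G) (hrb : ∀ k, ‖r k‖ ≤ R)
    (hiter : ∀ k, x (k+1) = P (x k - α k • (g k + r k))) :
    ∀ k, 1 ≤ k →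
      (Metric.infDist (x (k+1)) X)^2 ≤ (Metric.infDist (x k) X)^2
        - 2 * α k * (c - R) * Metric.infDist (x k) X
        + 2 * (α k)^2 * (R^2 + G^2) := by
  have hxC : ∀ k, 1 ≤ k → x k ∈ C := by
    intro k hk
    match k, hk with
    | 1, _ => exact hx1
    | (n+2), _ => rw [hiter (n+1)]; exact hPmem _
  intro k hk
  set d := Metric.infDist (x k) X with hd
  set a := α k with ha
  have ha0 : 0 < a := hαpos k
  have hd0 : 0 ≤ d := Metric.infDist_nonneg
  have hu : x k ∈ C := hxC k hk
  have key : ∀ t : ℝ, d < t →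
      (Metric.infDist (x (k+1)) X)^2 ≤ t^2 - 2*a*c*d + 2*a*R*t + 2*a^2*(R^2+G^2) := by
    intro t ht
    obtain ⟨y, hyX, hyt⟩ := (Metric.infDist_lt_iff hXne).mp ht
    have hyC : y ∈ C := by rw [hX] at hyX; exact hyX.1
    have hyh : h y = hstar := by rw [hX] at hyX; exact hyX.2
    have hyt' : ‖x k - y‖ < t := by rwa [dist_eq_norm] at hyt
    have ht0 : 0 < t := lt_of_le_of_lt (norm_nonneg _) hyt'
    -- distance step
    have hstep : Metric.infDist (x (k+1)) X ≤ ‖(x k - y) - a • (g k + r k)‖ := by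
      calc Metric.infDist (x (k+1)) X ≤ dist (x (k+1)) y := Metric.infDist_le_dist_of_mem hyX
        _ = ‖P (x k - a • (g k + r k)) - P y‖ := by rw [hiter k, dist_eq_norm, hPid y hyC]
        _ ≤ ‖(x k - a • (g k + r k)) - y‖ := hPnonexp _ _
        _ = ‖(x k - y) - a • (g k + r k)‖ := by rw [sub_right_comm]
    have hsq : (Metric.infDist (x (k+1)) X)^2 ≤ ‖(x k - y) - a • (g k + r k)‖^2 :=
      pow_le_pow_left₀ Metric.infDist_nonneg hstep 2
    have hexp : ‖(x k - y) - a • (g k + r k)‖^2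
        = ‖x k - y‖^2 - 2*(a*⟪g k, x k - y⟫ + a*⟪r k, x k - y⟫) + a^2*‖g k + r k‖^2 := by
      rw [norm_sub_sq_real, real_inner_smul_right, inner_add_right, norm_smul, mul_pow,
        Real.norm_eq_abs, sq_abs, real_inner_comm (x k - y) (g k),
        real_inner_comm (x k - y) (r k)]
      ring
    -- subgradient bound
    have hgd : c * d ≤ ⟪g k, x k - y⟫ := by
      have h1 := hg k y
      have h2 : ⟪g k, y - x k⟫ = ⟪g k, y⟫ - ⟪g k, x k⟫ := inner_sub_right _ _ _
      have h3 : ⟪g k, x k - y⟫ = ⟪g k, x k⟫ - ⟪g k, y⟫ := inner_sub_right _ _ _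
      have h4 := heb (x k) hu
      rw [hyh] at h1
      rw [← hd] at h4
      linarith
    -- noise bound
    have hrd : -(R * t) ≤ ⟪r k, x k - y⟫ := by
      have h1 : |⟪r k, x k - y⟫| ≤ ‖r k‖ * ‖x k - y‖ := abs_real_inner_le_norm _ _
      have h2 : ‖r k‖ * ‖x k - y‖ ≤ R * t :=
        mul_le_mul (hrb k) (le_of_lt hyt') (norm_nonneg _) hR
      have := neg_le_of_abs_le (h1.trans h2)
      linarith
    -- norm bound
    have hw2 : ‖g k + r k‖^2 ≤ 2*(R^2+G^2) := by
      have h1 : ‖g k + r k‖ ≤ G + R :=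
        (norm_add_le _ _).trans (add_le_add (hgb k) (hrb k))
      nlinarith [mul_self_le_mul_self (norm_nonneg (g k + r k)) h1, sq_nonneg (G - R)]
    have hxy2 : ‖x k - y‖^2 ≤ t^2 := by nlinarith [norm_nonneg (x k - y)]
    nlinarith [mul_le_mul_of_nonneg_left hgd (le_of_lt ha0),
      mul_le_mul_of_nonneg_left hrd (le_of_lt ha0),
      mul_le_mul_of_nonneg_left hw2 (sq_nonneg a)]
  have lim : Filter.Tendsto (fun t : ℝ => t^2 - 2*a*c*d + 2*a*R*t + 2*a^2*(R^2+G^2))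
      (nhdsWithin d (Set.Ioi d)) (nhds (d^2 - 2*a*c*d + 2*a*R*d + 2*a^2*(R^2+G^2))) := by
    apply Filter.Tendsto.mono_left _ nhdsWithin_le_nhds
    have hcont : Continuous fun t : ℝ => t^2 - 2*a*c*d + 2*a*R*t + 2*a^2*(R^2+G^2) := by
      fun_prop
    exact hcont.tendsto d
  have hle : (Metric.infDist (x (k+1)) X)^2
      ≤ d^2 - 2*a*c*d + 2*a*R*d + 2*a^2*(R^2+G^2) :=
    ge_of_tendsto lim (eventually_nhdsWithin_of_forall fun t ht => key t ht)
  have heq : d^2 - 2*a*(c-R)*d + 2*a^2*(R^2+G^2)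
      = d^2 - 2*a*c*d + 2*a*R*d + 2*a^2*(R^2+G^2) := by ring
  rw [heq]
  exact hle
end

section
/- Let $(e_k)_{k\ge1}$ be a sequence of nonnegative reals satisfying $e_{k+1} \le e_k - 2\alpha_1 k^{-p} c\, e_k^{\gamma} + \alpha_1^2 k^{-2p} G^2$ for all $k \ge 1$, where $\gamma > 1$, $p \in (0,1)$, $c, G, \alpha_1 > 0$. Suppose for indices $i = 2, \dots, s$ we have $\alpha_{k+i-1} G^2 < c\, e_{k+i-1}^{\gamma}$ (so that $e_{k+i} < e_{k+i-1} - \alpha_1 (k+i-1)^{-p} c\, e_{k+i-1}^{\gamma}$). Then for $i = 2, \dots, s$: $e_{k+i} \le e_{k+1}\left[1 + \frac{\alpha_1 (\gamma - 1) c\, e_{k+1}^{\gamma - 1}}{1-p}\left((k+i)^{1-p} - (k+1)^{1-p}\right)\right]^{-1/(\gamma-1)}$. -/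
/-- Bernoulli-type convexity inequality for negative exponents. -/
lemma bern_neg {q u v : ℝ} (hq : 0 < q) (hv : 0 < v) (hvu : v ≤ u) :
    u ^ (-q) + q * u ^ (-q-1) * (u - v) ≤ v ^ (-q) := by
  have hu : 0 < u := hv.trans_le hvu
  have hs : (0:ℝ) ≤ u / v - 1 := by
    rw [sub_nonneg, le_div_iff₀ hv]; linarith
  have hb := one_add_mul_self_le_rpow_one_add (s := u/v - 1) (by linarith) (p := q+1)
    (by linarith)
  have hrw : (1:ℝ) + (u/v - 1) = u/v := by ring
  rw [hrw] at hb
  have hmul := mul_le_mul_of_nonneg_left hb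
    (show (0:ℝ) ≤ v * u^(-q-1) by positivity)
  have h1 : u^(-q-1) * u^(q+1) = 1 := by
    have h0 : (-q-1) + (q+1) = (0:ℝ) := by ring
    rw [← Real.rpow_add hu, h0, Real.rpow_zero]
  have h3 : u^(-q-1) * u = u^(-q) := by
    calc u^(-q-1)*u = u^(-q-1)*u^(1:ℝ) := by rw [Real.rpow_one]
      _ = u^((-q-1)+1) := (Real.rpow_add hu _ _).symm
      _ = u^(-q) := by norm_num
  have hvq : (0:ℝ) < v^q := Real.rpow_pos_of_pos hv q
  have hrhs : v*u^(-q-1) * (u/v)^(q+1) = v^(-q) := by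
    rw [Real.div_rpow hu.le hv.le]
    have h2 : v^(q+1) = v^q * v := by rw [Real.rpow_add hv, Real.rpow_one]
    rw [h2]
    calc v*u^(-q-1)*(u^(q+1)/(v^q*v)) = (u^(-q-1)*u^(q+1)) * (v / (v^q * v)) := by ring
      _ = 1 * (v/(v^q*v)) := by rw [h1]
      _ = (v^q)⁻¹ := by field_simp
      _ = v^(-q) := (Real.rpow_neg hv.le q).symm
  have hlhs : v*u^(-q-1) * (1 + (q+1)*(u/v-1)) = u^(-q) + q*u^(-q-1)*(u-v) := by
    have h4 : v * (1 + (q+1)*(u/v - 1)) = u + q*(u-v) := by field_simp; ring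
    calc v*u^(-q-1)*(1+(q+1)*(u/v-1)) = u^(-q-1) * (v*(1+(q+1)*(u/v-1))) := by ring
      _ = u^(-q-1) * (u + q*(u-v)) := by rw [h4]
      _ = u^(-q-1)*u + q*u^(-q-1)*(u-v) := by ring
      _ = u^(-q) + q*u^(-q-1)*(u-v) := by rw [h3]
  rw [hrhs] at hmul
  calc u^(-q) + q*u^(-q-1)*(u-v) = v*u^(-q-1) * (1 + (q+1)*(u/v-1)) := hlhs.symm
    _ ≤ v^(-q) := hmul

/-- Key step: Polyak recursion in reciprocal form. -/
lemma bern_key {q g u v : ℝ} (hq : 0 < q) (hg : 0 ≤ g) (hv : 0 < v) (hvu : v ≤ u)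
    (h : g * u ^ (q+1) ≤ u - v) : u ^ (-q) + q * g ≤ v ^ (-q) := by
  have hu : 0 < u := hv.trans_le hvu
  have hX : 0 ≤ u^(-q-1) := Real.rpow_nonneg hu.le _
  have hid : u^(-q-1) * u^(q+1) = 1 := by
    have h0 : (-q-1) + (q+1) = (0:ℝ) := by ring
    rw [← Real.rpow_add hu, h0, Real.rpow_zero]
  have hbn := bern_neg hq hv hvu
  have h2 : q * g ≤ q * u^(-q-1) * (u - v) := by
    have hmm := mul_le_mul_of_nonneg_left h (mul_nonneg hq.le hX)
    have e2 : q*u^(-q-1)*(g*u^(q+1)) = q*g := by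
      calc q*u^(-q-1)*(g*u^(q+1)) = q*g*(u^(-q-1)*u^(q+1)) := by ring
        _ = q*g := by rw [hid, mul_one]
    nlinarith [hmm, e2]
  linarith

/-- Concavity-type per-term estimate for the integral comparison. -/
lemma term_ineq {p x : ℝ} (hp0 : 0 < p) (hp1 : p < 1) (hx : 1 ≤ x) :
    (x+1)^(1-p) ≤ x^(1-p) + (1-p)*x^(-p) := by
  have hx0 : 0 < x := lt_of_lt_of_le one_pos hx
  have hinv : (0:ℝ) < 1/x := by positivity
  have hb := rpow_one_add_le_one_add_mul_self (s := 1/x) (by linarith) (p := 1-p)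
    (by linarith) (by linarith)
  have h1 : (x+1)^(1-p) = x^(1-p) * (1+1/x)^(1-p) := by
    rw [← Real.mul_rpow hx0.le (by positivity)]
    congr 1; field_simp
  have h2 : x^(1-p) * (1/x) = x^(-p) := by
    calc x^(1-p) * (1/x) = x^(1-p) * x^(-1:ℝ) := by
          rw [Real.rpow_neg_one]; ring
      _ = x^((1-p)+(-1)) := (Real.rpow_add hx0 _ _).symm
      _ = x^(-p) := by congr 1; ring
  have h5 : 0 ≤ x^(1-p) := Real.rpow_nonneg hx0.le _
  calc (x+1)^(1-p) = x^(1-p) * (1+1/x)^(1-p) := h1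
    _ ≤ x^(1-p) * (1 + (1-p)*(1/x)) := mul_le_mul_of_nonneg_left hb h5
    _ = x^(1-p) + (1-p)*(x^(1-p)*(1/x)) := by ring
    _ = x^(1-p) + (1-p)*x^(-p) := by rw [h2]

theorem stmt18 (e : ℕ → ℝ) (γ p c G α1 : ℝ) (hγ : 1 < γ) (hp : p ∈ Set.Ioo (0:ℝ) 1)
    (hc : 0 < c) (hG : 0 < G) (hα : 0 < α1) (he : ∀ n, 0 ≤ e n)
    (hrec : ∀ n, 1 ≤ n →
      e (n+1) ≤ e n - 2*α1*(n:ℝ)^(-p)*c*(e n)^γ + α1^2*(n:ℝ)^(-2*p)*G^2)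
    (k s : ℕ) (hk : 1 ≤ k)
    (hbig : ∀ i, 2 ≤ i → i ≤ s →
      α1*((k:ℝ)+(i:ℝ)-1)^(-p)*G^2 < c*(e (k+i-1))^γ) :
    ∀ i, 2 ≤ i → i ≤ s →
      e (k+i) ≤ e (k+1) * (1 + α1*(γ-1)*c*(e (k+1))^(γ-1)/(1-p) *
        (((k:ℝ)+(i:ℝ))^(1-p) - ((k:ℝ)+1)^(1-p))) ^ (-(1/(γ-1))) := by
  obtain ⟨hp0, hp1⟩ := hp
  have hq : 0 < γ - 1 := by linarith
  have hE0 : 0 ≤ e (k+1) := he _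
  have hEq0 : 0 ≤ (e (k+1))^(γ-1) := Real.rpow_nonneg hE0 _
  -- step inequality for interior indices
  have hstep : ∀ i:ℕ, 1 ≤ i → i+1 ≤ s →
      e (k+i+1) ≤ e (k+i) - α1 * c * ((k+i:ℕ):ℝ)^(-p) * (e (k+i))^γ := by
    intro i hi his
    have hx : (0:ℝ) < ((k+i:ℕ):ℝ) := by positivity
    have hb := hbig (i+1) (by omega) his
    have hcast : (k:ℝ) + ((i+1:ℕ):ℝ) - 1 = ((k+i:ℕ):ℝ) := by push_cast; ring
    have hidx : k + (i+1) - 1 = k+i := by omega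
    rw [hcast, hidx] at hb
    have hr := hrec (k+i) (by omega)
    have h2p : ((k+i:ℕ):ℝ)^(-2*p) = ((k+i:ℕ):ℝ)^(-p) * ((k+i:ℕ):ℝ)^(-p) := by
      rw [← Real.rpow_add hx]; congr 1; ring
    have hnp : (0:ℝ) < ((k+i:ℕ):ℝ)^(-p) := Real.rpow_pos_of_pos hx _
    have hchain : α1^2 * ((k+i:ℕ):ℝ)^(-2*p) * G^2
        ≤ α1 * ((k+i:ℕ):ℝ)^(-p) * (c * (e (k+i))^γ) := by
      calc α1^2 * ((k+i:ℕ):ℝ)^(-2*p) * G^2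
          = (α1*((k+i:ℕ):ℝ)^(-p)) * (α1*((k+i:ℕ):ℝ)^(-p)*G^2) := by rw [h2p]; ring
        _ ≤ (α1*((k+i:ℕ):ℝ)^(-p)) * (c * (e (k+i))^γ) :=
            mul_le_mul_of_nonneg_left hb.le (by positivity)
    linarith
  -- main Polyak-type induction
  have main : ∀ i, 1 ≤ i → i ≤ s →
      (e (k+i))^(γ-1) * (1 + α1*(γ-1)*c*(e (k+1))^(γ-1) *
        (∑ j ∈ Finset.Ico (k+1) (k+i), ((j:ℝ))^(-p))) ≤ (e (k+1))^(γ-1) := by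
    refine Nat.le_induction ?_ ?_
    · intro _
      simp
    · intro i hi ih his
      have hQ := ih (by omega)
      have hst := hstep i hi his
      have hrwn : k + (i+1) = k+i+1 := rfl
      rw [hrwn]
      have hSsucc : (∑ j ∈ Finset.Ico (k+1) (k+i+1), ((j:ℝ))^(-p))
          = (∑ j ∈ Finset.Ico (k+1) (k+i), ((j:ℝ))^(-p)) + ((k+i:ℕ):ℝ)^(-p) := by
        rw [Finset.sum_Ico_succ_top (by omega)]
      rw [hSsucc]
      have hx : (0:ℝ) < ((k+i:ℕ):ℝ) := by positivity
      have hnp : (0:ℝ) < ((k+i:ℕ):ℝ)^(-p) := Real.rpow_pos_of_pos hx _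
      have hS0 : 0 ≤ (∑ j ∈ Finset.Ico (k+1) (k+i), ((j:ℝ))^(-p)) :=
        Finset.sum_nonneg fun j _ => Real.rpow_nonneg (Nat.cast_nonneg j) _
      rcases eq_or_lt_of_le (he (k+i+1)) with hv0 | hv0
      · rw [← hv0, Real.zero_rpow (by linarith : γ-1 ≠ 0), zero_mul]
        exact hEq0
      · have hγ0 : γ ≠ 0 := by linarith
        have hu0 : 0 < e (k+i) := by
          rcases eq_or_lt_of_le (he (k+i)) with h0 | h0
          · exfalso
            rw [← h0, Real.zero_rpow hγ0] at hst
            simp at hst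
            linarith
          · exact h0
        have hvu : e (k+i+1) ≤ e (k+i) := by
          have hpos : 0 ≤ α1 * c * ((k+i:ℕ):ℝ)^(-p) * (e (k+i))^γ := by
            have := Real.rpow_nonneg (he (k+i)) γ
            positivity
          linarith
        have hkey : (e (k+i))^(-(γ-1)) + (γ-1) * (α1*c*((k+i:ℕ):ℝ)^(-p))
            ≤ (e (k+i+1))^(-(γ-1)) := by
          apply bern_key hq (by positivity) hv0 hvu
          have : (γ-1)+1 = γ := by ring
          rw [this]
          linarith
        have hupos : 0 < (e (k+i))^(γ-1) := Real.rpow_pos_of_pos hu0 _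
        have hvpos : 0 < (e (k+i+1))^(γ-1) := Real.rpow_pos_of_pos hv0 _
        have huinv : (e (k+i))^(-(γ-1)) = ((e (k+i))^(γ-1))⁻¹ := Real.rpow_neg hu0.le _
        have hvinv : (e (k+i+1))^(-(γ-1)) = ((e (k+i+1))^(γ-1))⁻¹ := Real.rpow_neg hv0.le _
        -- from hQ : 1 + B ≤ E^q * (u^q)⁻¹
        have h1 : 1 + α1*(γ-1)*c*(e (k+1))^(γ-1) *
            (∑ j ∈ Finset.Ico (k+1) (k+i), ((j:ℝ))^(-p))
            ≤ (e (k+1))^(γ-1) * ((e (k+i))^(γ-1))⁻¹ := by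
          rw [← div_eq_mul_inv, le_div_iff₀ hupos]
          nlinarith [hQ]
        have h2 : 1 + α1*(γ-1)*c*(e (k+1))^(γ-1) *
            ((∑ j ∈ Finset.Ico (k+1) (k+i), ((j:ℝ))^(-p)) + ((k+i:ℕ):ℝ)^(-p))
            ≤ (e (k+1))^(γ-1) * ((e (k+i+1))^(γ-1))⁻¹ := by
          have h3 := mul_le_mul_of_nonneg_left hkey hEq0
          rw [huinv, hvinv] at h3
          nlinarith [h3, h1]
        calc (e (k+i+1))^(γ-1) * (1 + α1*(γ-1)*c*(e (k+1))^(γ-1) *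
            ((∑ j ∈ Finset.Ico (k+1) (k+i), ((j:ℝ))^(-p)) + ((k+i:ℕ):ℝ)^(-p)))
            ≤ (e (k+i+1))^(γ-1) * ((e (k+1))^(γ-1) * ((e (k+i+1))^(γ-1))⁻¹) :=
              mul_le_mul_of_nonneg_left h2 hvpos.le
          _ = (e (k+1))^(γ-1) := by field_simp
  -- sum lower bound via integral comparison
  have hsum : ∀ i, 1 ≤ i →
      (((k+i:ℕ):ℝ)^(1-p) - ((k+1:ℕ):ℝ)^(1-p))/(1-p)
        ≤ ∑ j ∈ Finset.Ico (k+1) (k+i), ((j:ℝ))^(-p) := by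
    refine Nat.le_induction ?_ ?_
    · simp
    · intro i hi ih
      have hrwn : k + (i+1) = k+i+1 := rfl
      rw [hrwn, Finset.sum_Ico_succ_top (by omega)]
      have hx1 : (1:ℝ) ≤ ((k+i:ℕ):ℝ) := by exact_mod_cast Nat.one_le_iff_ne_zero.mpr (by omega)
      have ht := term_ineq hp0 hp1 hx1
      have hcast : ((k+i+1:ℕ):ℝ) = ((k+i:ℕ):ℝ) + 1 := by push_cast; ring
      rw [hcast]
      have h1p : (0:ℝ) < 1-p := by linarith
      have hd : (((k+i:ℕ):ℝ)+1)^(1-p) - ((k+i:ℕ):ℝ)^(1-p) ≤ (1-p)*((k+i:ℕ):ℝ)^(-p) := by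
        linarith
      have hd2 : ((((k+i:ℕ):ℝ)+1)^(1-p) - ((k+i:ℕ):ℝ)^(1-p))/(1-p) ≤ ((k+i:ℕ):ℝ)^(-p) := by
        rw [div_le_iff₀ h1p]; linarith
      have hsplit : ((((k+i:ℕ):ℝ)+1)^(1-p) - ((k+1:ℕ):ℝ)^(1-p))/(1-p)
          = ((((k+i:ℕ):ℝ)+1)^(1-p) - ((k+i:ℕ):ℝ)^(1-p))/(1-p)
            + (((k+i:ℕ):ℝ)^(1-p) - ((k+1:ℕ):ℝ)^(1-p))/(1-p) := by ring
      rw [hsplit]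
      linarith
  -- final assembly
  intro i hi2 his
  have hQ := main i (by omega) his
  have hT := hsum i (by omega)
  have hcast1 : (k:ℝ) + (i:ℝ) = ((k+i:ℕ):ℝ) := by push_cast; ring
  have hcast2 : (k:ℝ) + 1 = ((k+1:ℕ):ℝ) := by push_cast; ring
  rw [hcast1, hcast2]
  set Δ : ℝ := ((k+i:ℕ):ℝ)^(1-p) - ((k+1:ℕ):ℝ)^(1-p) with hΔ
  have hΔ0 : 0 ≤ Δ := by
    rw [hΔ, sub_nonneg]
    apply Real.rpow_le_rpow (by positivity) (by exact_mod_cast (by omega : k+1 ≤ k+i)) (by linarith)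
  have h1p : (0:ℝ) < 1-p := by linarith
  set D : ℝ := 1 + α1*(γ-1)*c*(e (k+1))^(γ-1)/(1-p) * Δ with hD
  have hD1 : (1:ℝ) ≤ D := by
    rw [hD]
    have : 0 ≤ α1*(γ-1)*c*(e (k+1))^(γ-1)/(1-p) * Δ := by positivity
    linarith
  have hD0 : (0:ℝ) < D := by linarith
  have hDle : D ≤ 1 + α1*(γ-1)*c*(e (k+1))^(γ-1) *
      (∑ j ∈ Finset.Ico (k+1) (k+i), ((j:ℝ))^(-p)) := by
    rw [hD]
    have hC0 : 0 ≤ α1*(γ-1)*c*(e (k+1))^(γ-1) := by positivity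
    have : α1*(γ-1)*c*(e (k+1))^(γ-1)/(1-p) * Δ
        = α1*(γ-1)*c*(e (k+1))^(γ-1) * (Δ/(1-p)) := by ring
    rw [this]
    have := mul_le_mul_of_nonneg_left hT hC0
    linarith
  have hu0 : 0 ≤ e (k+i) := he _
  have huq0 : 0 ≤ (e (k+i))^(γ-1) := Real.rpow_nonneg hu0 _
  have h3 : (e (k+i))^(γ-1) * D ≤ (e (k+1))^(γ-1) :=
    le_trans (mul_le_mul_of_nonneg_left hDle huq0) hQ
  have h4 : (e (k+i))^(γ-1) ≤ (e (k+1))^(γ-1) * D⁻¹ := by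
    rw [← div_eq_mul_inv, le_div_iff₀ hD0]
    exact h3
  have hqq : (γ-1) * (1/(γ-1)) = 1 := by field_simp
  have h5 : ((e (k+i))^(γ-1))^(1/(γ-1)) ≤ ((e (k+1))^(γ-1) * D⁻¹)^(1/(γ-1)) :=
    Real.rpow_le_rpow huq0 h4 (by positivity)
  have hL : ((e (k+i))^(γ-1))^(1/(γ-1)) = e (k+i) := by
    rw [← Real.rpow_mul hu0, hqq, Real.rpow_one]
  have hR : ((e (k+1))^(γ-1) * D⁻¹)^(1/(γ-1)) = e (k+1) * D^(-(1/(γ-1))) := by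
    rw [Real.mul_rpow hEq0 (by positivity), ← Real.rpow_mul hE0, hqq, Real.rpow_one,
      Real.inv_rpow hD0.le, ← Real.rpow_neg hD0.le]
  rw [hL, hR] at h5
  exact h5
end

section
/- Let $h$ be a convex closed proper function on a real Hilbert space, $\mathcal{C}$ nonempty closed convex, $\mathcal{X}_h = \arg\min_{\mathcal{C}} h$ nonempty, and suppose $h$ satisfies Goffin's condition: there exists $\mu > 0$ such that $\langle u, x - x_p^* \rangle \ge \mu \|u\| \|x - x_p^*\|$ for all $x \in \mathcal{C} \setminus \mathcal{X}_h$, $u \in \partial h(x)$, where $x_p^* = \mathrm{proj}_{\mathcal{X}_h}(x)$. Then the normalized projected subgradient iteration $x_{k+1} = P_{\mathcal{C}}(x_k - \alpha_k g_k/\|g_k\|)$, $g_k \in \partial h(x_k)$ (for $x_k \notin \mathcal{X}_h$), satisfies $d(x_{k+1}, \mathcal{X}_h)^2 \le d(x_k, \mathcal{X}_h)^2 - 2\alpha_k \mu\, d(x_k, \mathcal{X}_h) + \alpha_k^2$ for all $k \ge 1$. -/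
open RealInnerProductSpace

theorem stmt19 {H : Type*} [NormedAddCommGroup H] [InnerProductSpace ℝ H]
    (C X : Set H) (hCconv : Convex ℝ C) (hCclosed : IsClosed C) (hCne : C.Nonempty)
    (h : H → ℝ) (hconv : ConvexOn ℝ Set.univ h) (hcont : Continuous h)
    (hX : X = {x | x ∈ C ∧ ∀ y ∈ C, h x ≤ h y}) (hXne : X.Nonempty)
    (μ : ℝ) (hμ : 0 < μ)
    (hproj : ∀ x : H, ∃ xp ∈ X, ‖x - xp‖ = Metric.infDist x X)
    (hgoffin : ∀ x ∈ C \ X, ∀ u : H, (∀ y, h x + ⟪u, y - x⟫ ≤ h y) →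
      ∀ xp ∈ X, ‖x - xp‖ = Metric.infDist x X →
        μ * ‖u‖ * ‖x - xp‖ ≤ ⟪u, x - xp⟫)
    (P : H → H) (hPmem : ∀ x, P x ∈ C)
    (hPnonexp : ∀ x y, ‖P x - P y‖ ≤ ‖x - y‖)
    (hPid : ∀ x ∈ C, P x = x)
    (x g : ℕ → H) (α : ℕ → ℝ) (hαpos : ∀ k, 0 < α k)
    (hx1 : x 1 ∈ C) (hnotmin : ∀ k, x k ∉ X)
    (hg : ∀ k, ∀ y, h (x k) + ⟪g k, y - x k⟫ ≤ h y)
    (hiter : ∀ k, x (k+1) = P (x k - α k • (‖g k‖⁻¹ • g k))) :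
    ∀ k, 1 ≤ k →
      (Metric.infDist (x (k+1)) X)^2 ≤ (Metric.infDist (x k) X)^2
        - 2 * α k * μ * Metric.infDist (x k) X + (α k)^2 := by
  intro k hk
  have hxC : x k ∈ C := by
    match k, hk with
    | 1, _ => exact hx1
    | (n+2), _ => rw [show n+2 = (n+1)+1 from rfl, hiter]; exact hPmem _
  have hgne : g k ≠ 0 := by
    intro h0
    apply hnotmin k
    rw [hX]
    refine ⟨hxC, fun y hy => ?_⟩
    have := hg k y
    simp [h0] at this
    exact this
  have hgnorm : ‖g k‖ ≠ 0 := norm_ne_zero_iff.mpr hgne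
  obtain ⟨xp, hxpX, hxpd⟩ := hproj (x k)
  have hxpC : xp ∈ C := by rw [hX] at hxpX; exact hxpX.1
  have hgoff := hgoffin (x k) ⟨hxC, hnotmin k⟩ (g k) (hg k) xp hxpX hxpd
  set d := Metric.infDist (x k) X with hd
  set a := x k - xp with ha
  have hdnn : 0 ≤ d := Metric.infDist_nonneg
  set gu : H := ‖g k‖⁻¹ • g k with hgu
  have hgunorm : ‖gu‖ = 1 := by
    rw [hgu, norm_smul, norm_inv, norm_norm, inv_mul_cancel₀ hgnorm]
  -- inner product bound
  have hip : μ * d ≤ ⟪gu, a⟫ := by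
    rw [hgu, real_inner_smul_left]
    have hpos : 0 < ‖g k‖⁻¹ := by positivity
    have : μ * ‖g k‖ * ‖a‖ ≤ ⟪g k, a⟫ := hgoff
    have h2 : ‖g k‖⁻¹ * (μ * ‖g k‖ * ‖a‖) ≤ ‖g k‖⁻¹ * ⟪g k, a⟫ :=
      mul_le_mul_of_nonneg_left this hpos.le
    calc μ * d = ‖g k‖⁻¹ * (μ * ‖g k‖ * ‖a‖) := by
          rw [← hxpd]; field_simp
      _ ≤ ‖g k‖⁻¹ * ⟪g k, a⟫ := h2
  -- distance bound
  have hstep : ‖x (k+1) - xp‖ ≤ ‖a - α k • gu‖ := by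
    rw [hiter k, ← hPid xp hxpC]
    have := hPnonexp (x k - α k • gu) xp
    calc ‖P (x k - α k • gu) - P xp‖ ≤ ‖x k - α k • gu - xp‖ := this
      _ = ‖a - α k • gu‖ := by rw [ha, sub_right_comm]
  have hsq : ‖a - α k • gu‖^2 = ‖a‖^2 - 2 * (α k) * ⟪gu, a⟫ + (α k)^2 := by
    rw [norm_sub_sq_real, real_inner_smul_right, norm_smul]
    rw [real_inner_comm]
    rw [hgunorm]
    simp [Real.norm_eq_abs, mul_pow, sq_abs]
    ring
  have hle1 : Metric.infDist (x (k+1)) X ≤ ‖a - α k • gu‖ :=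
    le_trans (by simpa [dist_eq_norm] using Metric.infDist_le_dist_of_mem hxpX) hstep
  have hfinal : ‖a - α k • gu‖^2 ≤ d^2 - 2 * α k * μ * d + (α k)^2 := by
    rw [hsq, ← hxpd]
    have h2 := mul_le_mul_of_nonneg_left hip (by linarith [hαpos k] : (0:ℝ) ≤ 2 * α k)
    rw [← hxpd] at h2
    linarith
  calc (Metric.infDist (x (k+1)) X)^2 ≤ ‖a - α k • gu‖^2 := by
        apply pow_le_pow_left₀ Metric.infDist_nonneg hle1
    _ ≤ d^2 - 2 * α k * μ * d + (α k)^2 := hfinal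
end
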